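/- Let d ≥ 2, ε ∈ (0, 1/2), K = ⌊1/(2ε)⌋, c ∈ (0,1), and μ₀ ∈ (0, 1]; assume K^{d−1} is even. For each labeling φ : {1,…,K}^{d−1} → {−1,1} and index tuple i, define x_φ(i) ∈ ℝ^d with coordinates (i₁/K, …, i_{d−1}/K, 1/2 + cε·φ(i)). Let F be a family of functions from ℝ^d to ℝ such that no finite subset of ℝ^d of cardinality at least K^{d−1}/20 is sign-shattered by F. Then there exists a labeling φ such that, for every weight function w assigning to each index tuple i a weight w(i) ≥ μ₀/K^{d−1} with Σ_i w(i) = 1, and every f ∈ F, the cε-robust error of f is at least μ₀/10; that is, the sum of w(i) over those index tuples i for which there exists x' ∈ ℝ^d with ‖x' − x_φ(i)‖∞ ≤ cε and not (f(x') > 0 if φ(i) = 1, and f(x') < 0 if φ(i) = −1), is at least μ₀/10. -/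

import Mathlib

/-!
Encode a labeling `φ` by its set `P` of positive indices, and let `xᵢ` be the grid point at
height `1/2`, which lies within `cε` of `x_φ(i)` whatever `φ` is. If every labeling had a
robust-error set `E` of weight `< μ₀/10`, then `10·|E| < N = K^{d-1}` and some `f ∈ F` would
realize `P` on the points `xᵢ`, `i ∉ E`. Hence `P \ E` lies in the family of sign patterns that
`F` realizes on `Eᶜ`, whose shattered sets are at most `N/20` large, so by Sauer–Shelah
it has at most `20^{N/20} (20/19)^N` members. Counting triples `(E, P ∩ E, P \ E)` gives
`2^N ≤ 20^{N/20} · 40^{N/10} · (20/19)^{2N}`, which is false.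
-/

/-- The point `x_φ(i) = (i₁/K, …, i_{d−1}/K, 1/2 + ε₀·φ(i))` of the lower-bound
construction, where the index tuple `i : Fin (d-1) → Fin K` encodes the tuple
`(i₁,…,i_{d−1}) ∈ {1,…,K}^{d−1}` (so the coordinate value is `((i j : ℕ) + 1)/K`). -/
noncomputable def gridPt (d K : ℕ) (ε₀ : ℝ) (φ : (Fin (d - 1) → Fin K) → ℝ)
    (i : Fin (d - 1) → Fin K) : Fin d → ℝ :=
  fun j => if h : (j : ℕ) < d - 1 then (((i ⟨j, h⟩ : ℕ) : ℝ) + 1) / K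
           else 1 / 2 + ε₀ * φ i

/-- A family `F` of real-valued functions sign-shatters a finite set `S` if for
every subset `T ⊆ S` there is `f ∈ F` which is positive on `T` and negative on
`S \ T`. -/
def SignShatters {X : Type*} (F : Set (X → ℝ)) (S : Finset X) : Prop :=
  ∀ T ⊆ S, ∃ f ∈ F, (∀ x ∈ T, 0 < f x) ∧ (∀ x ∈ S, x ∉ T → f x < 0)

open Finset Function

section Combinatorics

variable {ι X : Type*}

def RealizesOn (f : X → ℝ) (x : ι → X) (P G : Finset ι) : Prop :=
  ∀ i ∈ G, (i ∈ P → 0 < f (x i)) ∧ (i ∉ P → f (x i) < 0)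

open scoped Classical in
noncomputable def strictSignTraces (F : Set (X → ℝ)) (x : ι → X) (G : Finset ι) :
    Finset (Finset ι) :=
  G.powerset.filter fun A => ∃ f ∈ F, RealizesOn f x A G

lemma signShatters_image_of_shatters [DecidableEq ι] [DecidableEq X] {F : Set (X → ℝ)}
    {x : ι → X} {G S : Finset ι} (hS : (strictSignTraces F x G).Shatters S) :
    SignShatters F (S.image x) := by
  classical
  have hSG : S ⊆ G := by
    obtain ⟨A, hA, hSA⟩ := hS subset_rfl
    exact (inter_eq_left.1 hSA).trans (mem_powerset.1 (mem_filter.1 hA).1)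
  intro T hT
  obtain ⟨A, hA, hSA⟩ := hS (filter_subset (fun i => x i ∈ T) S)
  obtain ⟨f, hf, hfA⟩ := (mem_filter.1 hA).2
  refine ⟨f, hf, fun y hy => ?_, fun y hy hyT => ?_⟩
  · obtain ⟨i, hiS, rfl⟩ := mem_image.1 (hT hy)
    have hiA : i ∈ S ∩ A := hSA ▸ mem_filter.2 ⟨hiS, hy⟩
    exact (hfA i (hSG hiS)).1 (mem_inter.1 hiA).2
  · obtain ⟨i, hiS, rfl⟩ := mem_image.1 hy
    have hiA : i ∉ A := by
      intro hiA
      have hiT : i ∈ S.filter fun i => x i ∈ T := hSA ▸ mem_inter.2 ⟨hiS, hiA⟩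
      exact hyT (mem_filter.1 hiT).2
    exact (hfA i (hSG hiS)).2 hiA

lemma card_le_inv_pow_mul_inv_pow [Fintype ι] {𝒮 : Finset (Finset ι)} {r : ℕ}
    (h𝒮 : ∀ S ∈ 𝒮, #S ≤ r) {p : ℝ} (hp0 : 0 < p) (hp1 : p < 1) :
    (#𝒮 : ℝ) ≤ p⁻¹ ^ r * (1 - p)⁻¹ ^ Fintype.card ι := by
  have hq : 0 < 1 - p := sub_pos.2 hp1
  have key : (#𝒮 : ℝ) * (p ^ r * (1 - p) ^ Fintype.card ι) ≤ 1 :=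
    calc (#𝒮 : ℝ) * (p ^ r * (1 - p) ^ Fintype.card ι)
        = ∑ S ∈ 𝒮, p ^ r * (1 - p) ^ Fintype.card ι := by rw [sum_const, nsmul_eq_mul]
      _ ≤ ∑ S ∈ 𝒮, p ^ #S * (1 - p) ^ (Fintype.card ι - #S) := by
        refine sum_le_sum fun S hS => mul_le_mul ?_ ?_ (by positivity) (by positivity)
        · exact pow_le_pow_of_le_one hp0.le hp1.le (h𝒮 S hS)
        · exact pow_le_pow_of_le_one hq.le (by linarith) (Nat.sub_le _ _)
      _ ≤ ∑ S : Finset ι, p ^ #S * (1 - p) ^ (Fintype.card ι - #S) :=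
        sum_le_univ_sum_of_nonneg fun S => by positivity
      _ = 1 := by rw [Fintype.sum_pow_mul_eq_add_pow, add_sub_cancel, one_pow]
  rw [inv_pow, inv_pow, ← mul_inv, ← one_div, le_div_iff₀ (by positivity)]
  exact key

lemma card_le_twenty_pow_mul [Fintype ι] {𝒮 : Finset (Finset ι)} {r : ℕ}
    (h𝒮 : ∀ S ∈ 𝒮, #S ≤ r) : (#𝒮 : ℝ) ≤ 20 ^ r * (20 / 19) ^ Fintype.card ι := by
  convert card_le_inv_pow_mul_inv_pow h𝒮 (p := 1 / 20) (by norm_num) (by norm_num) using 3 <;>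
    norm_num

lemma card_strictSignTraces_le [Fintype ι] [DecidableEq ι] [DecidableEq X] {F : Set (X → ℝ)}
    {x : ι → X} (hx : Injective x)
    (hF : ∀ S : Finset X, (Fintype.card ι : ℝ) / 20 ≤ #S → ¬ SignShatters F S) (G : Finset ι) :
    (#(strictSignTraces F x G) : ℝ) ≤ 20 ^ (Fintype.card ι / 20) * (20 / 19) ^ Fintype.card ι := by
  have hsmall : ∀ S ∈ (strictSignTraces F x G).shatterer, #S ≤ Fintype.card ι / 20 := by
    intro S hS
    have hcard := mt (hF (S.image x)) (not_not.2 (signShatters_image_of_shatters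
      (mem_shatterer.1 hS)))
    rw [card_image_of_injective S hx, not_le, lt_div_iff₀ (by norm_num)] at hcard
    have : #S * 20 < Fintype.card ι := by exact_mod_cast hcard
    omega
  calc (#(strictSignTraces F x G) : ℝ) ≤ #(strictSignTraces F x G).shatterer := by
        exact_mod_cast card_le_card_shatterer _
    _ ≤ 20 ^ (Fintype.card ι / 20) * (20 / 19) ^ Fintype.card ι :=
        card_le_twenty_pow_mul hsmall

lemma two_pow_card_le_sum_card [Fintype ι] [DecidableEq ι] (Es : Finset (Finset ι))
    (𝒜 : Finset ι → Finset (Finset ι)) (hcover : ∀ P : Finset ι, ∃ E ∈ Es, P \ E ∈ 𝒜 E) :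
    2 ^ Fintype.card ι ≤ ∑ E ∈ Es, #(𝒜 E) * 2 ^ #E := by
  have hsub : (univ : Finset (Finset ι)) ⊆
      Es.biUnion fun E => (𝒜 E ×ˢ E.powerset).image fun AB => AB.1 ∪ AB.2 := by
    intro P _
    obtain ⟨E, hE, hPE⟩ := hcover P
    refine mem_biUnion.2 ⟨E, hE, mem_image.2 ⟨(P \ E, P ∩ E), ?_, sdiff_union_inter P E⟩⟩
    exact mem_product.2 ⟨hPE, mem_powerset.2 inter_subset_right⟩
  calc 2 ^ Fintype.card ι = #(univ : Finset (Finset ι)) := by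
        rw [card_univ, Fintype.card_finset]
    _ ≤ _ := card_le_card hsub
    _ ≤ ∑ E ∈ Es, #((𝒜 E ×ˢ E.powerset).image fun AB => AB.1 ∪ AB.2) := card_biUnion_le
    _ ≤ ∑ E ∈ Es, #(𝒜 E ×ˢ E.powerset) := sum_le_sum fun E _ => card_image_le
    _ = ∑ E ∈ Es, #(𝒜 E) * 2 ^ #E := by simp only [card_product, card_powerset]

lemma twenty_pow_mul_forty_pow_mul_lt_two_pow {N s r : ℕ} (hN : 0 < N) (hs : 20 * s ≤ N)
    (hr : 10 * r ≤ N) : (20 : ℝ) ^ s * 40 ^ r * (20 / 19) ^ (2 * N) < 2 ^ N := by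
  have h20 : ((20 : ℝ) ^ s) ^ 20 ≤ 20 ^ N := by
    rw [← pow_mul]; exact pow_le_pow_right₀ (by norm_num) (by omega)
  have h40 : ((40 : ℝ) ^ r) ^ 20 ≤ (40 ^ 2) ^ N := by
    rw [← pow_mul, ← pow_mul]; exact pow_le_pow_right₀ (by norm_num) (by omega)
  have hq : (((20 : ℝ) / 19) ^ (2 * N)) ^ 20 = ((20 / 19) ^ 40) ^ N := by
    rw [← pow_mul, ← pow_mul]; ring_nf
  refine lt_of_pow_lt_pow_left₀ 20 (by positivity) ?_
  calc ((20 : ℝ) ^ s * 40 ^ r * (20 / 19) ^ (2 * N)) ^ 20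
      = (20 ^ s) ^ 20 * (40 ^ r) ^ 20 * ((20 / 19) ^ (2 * N)) ^ 20 := by rw [mul_pow, mul_pow]
    _ ≤ 20 ^ N * (40 ^ 2) ^ N * ((20 / 19) ^ 40) ^ N := by rw [hq]; gcongr
    _ = (20 * 40 ^ 2 * (20 / 19) ^ 40) ^ N := by rw [mul_pow, mul_pow]
    _ < (2 ^ 20) ^ N := pow_lt_pow_left₀ (by norm_num) (by positivity) hN.ne'
    _ = (2 ^ N) ^ 20 := by rw [← pow_mul, ← pow_mul, mul_comm]

theorem exists_finset_lt_ten_mul_card_of_realizesOn_compl [Fintype ι] [Nonempty ι] [DecidableEq ι]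
    [DecidableEq X] {F : Set (X → ℝ)} {x : ι → X} (hx : Injective x)
    (hF : ∀ S : Finset X, (Fintype.card ι : ℝ) / 20 ≤ #S → ¬ SignShatters F S) :
    ∃ P : Finset ι, ∀ f ∈ F, ∀ E : Finset ι, RealizesOn f x P Eᶜ → Fintype.card ι < 10 * #E := by
  by_contra! h
  set N := Fintype.card ι
  set Es := univ.filter fun E : Finset ι => 10 * #E ≤ N
  have hcover : ∀ P, ∃ E ∈ Es, P \ E ∈ strictSignTraces F x Eᶜ := by
    intro P
    obtain ⟨f, hf, E, hfE, hE⟩ := h P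
    refine ⟨E, mem_filter.2 ⟨mem_univ _, hE⟩, ?_⟩
    simp only [strictSignTraces, mem_filter, mem_powerset]
    refine ⟨fun i hi => mem_compl.2 (mem_sdiff.1 hi).2, f, hf, fun i hi => ?_⟩
    simpa [mem_sdiff, mem_compl.1 hi] using hfE i hi
  have hEs : ∀ E ∈ Es, #E ≤ N / 10 := fun E hE => by
    have := (mem_filter.1 hE).2
    omega
  have hN : 0 < N := Fintype.card_pos
  refine lt_irrefl ((2 : ℝ) ^ N) ?_
  calc (2 : ℝ) ^ N
      ≤ ∑ E ∈ Es, (#(strictSignTraces F x Eᶜ) : ℝ) * 2 ^ #E := by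
        exact_mod_cast two_pow_card_le_sum_card Es _ hcover
    _ ≤ ∑ E ∈ Es, 20 ^ (N / 20) * (20 / 19) ^ N * 2 ^ (N / 10) := by
        gcongr with E hE
        · exact card_strictSignTraces_le hx hF _
        · norm_num
        · exact hEs E hE
    _ = #Es * (20 ^ (N / 20) * (20 / 19) ^ N * 2 ^ (N / 10)) := by rw [sum_const, nsmul_eq_mul]
    _ ≤ 20 ^ (N / 10) * (20 / 19) ^ N * (20 ^ (N / 20) * (20 / 19) ^ N * 2 ^ (N / 10)) := by
        gcongr
        exact card_le_twenty_pow_mul hEs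
    _ = 20 ^ (N / 20) * 40 ^ (N / 10) * (20 / 19) ^ (2 * N) := by
        rw [show (40 : ℝ) = 20 * 2 by norm_num, mul_pow]; ring
    _ < 2 ^ N := twenty_pow_mul_forty_pow_mul_lt_two_pow hN (by omega) (by omega)

end Combinatorics

lemma div_le_sum_of_le_mul_card {ι : Type*} {w : ι → ℝ} {E : Finset ι} {μ N k : ℝ}
    (hμ : 0 ≤ μ) (hN : 0 < N) (hk : 0 < k) (hw : ∀ i ∈ E, μ / N ≤ w i) (hE : N ≤ k * #E) :
    μ / k ≤ ∑ i ∈ E, w i :=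
  calc μ / k ≤ #E * (μ / N) := by
        rw [mul_div_assoc', div_le_div_iff₀ hk hN]
        nlinarith
    _ = ∑ i ∈ E, μ / N := by rw [sum_const, nsmul_eq_mul]
    _ ≤ ∑ i ∈ E, w i := sum_le_sum hw

lemma gridPt_injective (d K : ℕ) (ε₀ : ℝ) (φ : (Fin (d - 1) → Fin K) → ℝ) :
    Injective (gridPt d K ε₀ φ) := by
  intro i i' h
  funext j
  have hj := congrFun h ⟨j, by omega⟩
  simp only [gridPt, dif_pos j.isLt] at hj
  have hK : (K : ℝ) ≠ 0 := by have := (i j).pos; positivity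
  rw [div_left_inj' hK, add_left_inj, Nat.cast_inj] at hj
  exact Fin.ext hj

lemma norm_gridPt_sub_gridPt_le (d K : ℕ) (a b : ℝ) (φ ψ : (Fin (d - 1) → Fin K) → ℝ)
    (i : Fin (d - 1) → Fin K) :
    ‖gridPt d K a φ i - gridPt d K b ψ i‖ ≤ |a * φ i - b * ψ i| := by
  refine (pi_norm_le_iff_of_nonneg (abs_nonneg _)).2 fun j => ?_
  simp only [gridPt, Pi.sub_apply]
  split_ifs
  · simp
  · rw [Real.norm_eq_abs, add_sub_add_left_eq_sub]

open scoped Classical in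
theorem stmt_16_general (d K : ℕ) (ε c μ₀ : ℝ) (hε : ε ∈ Set.Ioo (0 : ℝ) (1/2))
    (hK : K = Nat.floor (1 / (2 * ε))) (hc : c ∈ Set.Ioo (0 : ℝ) 1)
    (hμ : μ₀ ∈ Set.Ioc (0 : ℝ) 1)
    (F : Set ((Fin d → ℝ) → ℝ))
    (hF : ∀ S : Finset (Fin d → ℝ), (K : ℝ) ^ (d - 1) / 20 ≤ (S.card : ℝ) →
      ¬ SignShatters F S) :
    ∃ φ : (Fin (d - 1) → Fin K) → ℝ, (∀ i, φ i = 1 ∨ φ i = -1) ∧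
      ∀ w : (Fin (d - 1) → Fin K) → ℝ,
        (∀ i, μ₀ / (K : ℝ) ^ (d - 1) ≤ w i) → (∑ i, w i) = 1 →
        ∀ f ∈ F, μ₀ / 10 ≤
          ∑ i : Fin (d - 1) → Fin K,
            (if ∃ x' : Fin d → ℝ, ‖x' - gridPt d K (c * ε) φ i‖ ≤ c * ε ∧
                ¬((φ i = 1 → 0 < f x') ∧ (φ i = -1 → f x' < 0))
             then w i else 0) := by
  have hcε : 0 ≤ c * ε := mul_nonneg hc.1.le hε.1.le
  have : NeZero K := ⟨by
    rw [hK, ← Nat.one_le_iff_ne_zero, Nat.one_le_floor_iff, one_le_div (by linarith [hε.1])]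
    linarith [hε.2]⟩
  have hcard : (Fintype.card (Fin (d - 1) → Fin K) : ℝ) = (K : ℝ) ^ (d - 1) := by simp
  obtain ⟨P, hP⟩ := exists_finset_lt_ten_mul_card_of_realizesOn_compl
    (gridPt_injective d K 0 0) (hcard ▸ hF)
  set φ : (Fin (d - 1) → Fin K) → ℝ := fun i => if i ∈ P then 1 else -1
  refine ⟨φ, fun i => by by_cases hi : i ∈ P <;> simp [φ, hi], fun w hw _ f hf => ?_⟩
  rw [← sum_filter]
  set E := univ.filter fun i => ∃ x' : Fin d → ℝ, ‖x' - gridPt d K (c * ε) φ i‖ ≤ c * ε ∧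
    ¬((φ i = 1 → 0 < f x') ∧ (φ i = -1 → f x' < 0))
  have hrealizes : RealizesOn f (gridPt d K 0 0) P Eᶜ := by
    intro i hi
    simp only [E, mem_compl, mem_filter, mem_univ, true_and, not_exists, not_and] at hi
    have hnear : ‖gridPt d K 0 0 i - gridPt d K (c * ε) φ i‖ ≤ c * ε :=
      (norm_gridPt_sub_gridPt_le d K _ _ _ _ i).trans_eq <| by
        by_cases hiP : i ∈ P <;> simp [φ, hiP, abs_of_nonneg hcε]
    by_cases hiP : i ∈ P <;> norm_num [φ, hiP] at hi ⊢ <;> exact hi _ hnear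
  refine div_le_sum_of_le_mul_card hμ.1.le ?_ (by norm_num) (fun i _ => hw i) ?_ <;> rw [← hcard]
  · exact_mod_cast Fintype.card_pos
  · exact_mod_cast (hP f hf E hrealizes).le

open scoped Classical in
theorem stmt_16 (d K : ℕ) (hd : 2 ≤ d) (ε c μ₀ : ℝ) (hε : ε ∈ Set.Ioo (0 : ℝ) (1/2))
    (hK : K = Nat.floor (1 / (2 * ε))) (hc : c ∈ Set.Ioo (0 : ℝ) 1)
    (hμ : μ₀ ∈ Set.Ioc (0 : ℝ) 1)
    (heven : Even (K ^ (d - 1)))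
    (F : Set ((Fin d → ℝ) → ℝ))
    (hF : ∀ S : Finset (Fin d → ℝ), (K : ℝ) ^ (d - 1) / 20 ≤ (S.card : ℝ) →
      ¬ SignShatters F S) :
    ∃ φ : (Fin (d - 1) → Fin K) → ℝ, (∀ i, φ i = 1 ∨ φ i = -1) ∧
      ∀ w : (Fin (d - 1) → Fin K) → ℝ,
        (∀ i, μ₀ / (K : ℝ) ^ (d - 1) ≤ w i) → (∑ i, w i) = 1 →
        ∀ f ∈ F, μ₀ / 10 ≤
          ∑ i : Fin (d - 1) → Fin K,
            (if ∃ x' : Fin d → ℝ, ‖x' - gridPt d K (c * ε) φ i‖ ≤ c * ε ∧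
                ¬((φ i = 1 → 0 < f x') ∧ (φ i = -1 → f x' < 0))
             then w i else 0) :=
  stmt_16_general d K ε c μ₀ hε hK hc hμ F hF
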